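/- Let A, B, 𝒯, κ be real numbers with 1/4 ≤ A, B > 0, A + B ≤ 1, 𝒯 > 0, and κ > 0. Define F_d(t) = A + B·exp(−(t/𝒯)^κ), g(F) = 𝒯·(log(B/(F−A)))^(1/κ), the decay map D_τ(F) = F_d(g(F) + τ), and the swapping fidelity F_s(F₁, F₂) = F₁·F₂ + (1/3)(1−F₁)(1−F₂). Then for every τ ≥ 0 and all F₁, F₂ with A < F₁ ≤ A + B and A < F₂ ≤ A + B, one has F_s(D_τ(F₁), D_τ(F₂)) ≤ F_s(F₁, F₂); i.e., letting both pairs decohere for time τ before swapping (Eq. (5) of the paper, F^τ_s(F₁,F₂) = F_s(F^τ(F₁), F^τ(F₂))) yields fidelity no larger than swapping them immediately. -/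

import Mathlib

/-!
Decoherence never raises fidelity: `g` inverts the decreasing curve `F_d` on `(A, A + B]`, so
`D_τ(F) = F_d(g F + τ) ≤ F_d(g F) = F`, while `D_τ(F) ≥ A ≥ 1/4`. Since
`F_s(F₁, F₂) = ((4F₁ - 1)(4F₂ - 1) + 3) / 12` is monotone in each argument on `[1/4, ∞)`,
swapping the decayed pairs gives at most `F_s(F₁, F₂)`.
-/

open Real Set

noncomputable section

def decayFidelity (A B 𝒯 κ t : ℝ) : ℝ := A + B * exp (-((t / 𝒯) ^ κ))

def decayTime (A B 𝒯 κ F : ℝ) : ℝ := 𝒯 * log (B / (F - A)) ^ (1 / κ)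

def swapFidelity (F₁ F₂ : ℝ) : ℝ := F₁ * F₂ + 1 / 3 * (1 - F₁) * (1 - F₂)

end

section Decay

variable {A B 𝒯 κ : ℝ}

lemma le_decayFidelity (hB : 0 ≤ B) (t : ℝ) : A ≤ decayFidelity A B 𝒯 κ t := by
  unfold decayFidelity
  have : 0 ≤ B * exp (-((t / 𝒯) ^ κ)) := by positivity
  linarith

lemma decayFidelity_antitoneOn (hB : 0 ≤ B) (h𝒯 : 0 ≤ 𝒯) (hκ : 0 ≤ κ) :
    AntitoneOn (decayFidelity A B 𝒯 κ) (Ici 0) := by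
  intro s hs t _ hst
  unfold decayFidelity
  have hs𝒯 : 0 ≤ s / 𝒯 := div_nonneg hs h𝒯
  gcongr

lemma one_le_div_sub_of_mem_Ioc {F : ℝ} (hF : F ∈ Ioc A (A + B)) : 1 ≤ B / (F - A) :=
  (one_le_div (sub_pos.mpr hF.1)).mpr (by linarith [hF.2])

lemma decayTime_nonneg (h𝒯 : 0 ≤ 𝒯) {F : ℝ} (hF : F ∈ Ioc A (A + B)) :
    0 ≤ decayTime A B 𝒯 κ F :=
  mul_nonneg h𝒯 (rpow_nonneg (log_nonneg (one_le_div_sub_of_mem_Ioc hF)) _)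

lemma decayFidelity_decayTime (h𝒯 : 𝒯 ≠ 0) (hκ : κ ≠ 0) {F : ℝ} (hF : F ∈ Ioc A (A + B)) :
    decayFidelity A B 𝒯 κ (decayTime A B 𝒯 κ F) = F := by
  have hratio := one_le_div_sub_of_mem_Ioc hF
  have hFA : F - A ≠ 0 := (sub_pos.mpr hF.1).ne'
  have hB : 0 < B := by linarith [hF.1, hF.2]
  unfold decayFidelity decayTime
  rw [mul_div_cancel_left₀ _ h𝒯, ← rpow_mul (log_nonneg hratio), one_div_mul_cancel hκ,
    rpow_one, exp_neg, exp_log (by linarith)]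
  field_simp
  ring

lemma decayFidelity_decayTime_add_le (h𝒯 : 0 < 𝒯) (hκ : 0 < κ) {F τ : ℝ}
    (hF : F ∈ Ioc A (A + B)) (hτ : 0 ≤ τ) :
    decayFidelity A B 𝒯 κ (decayTime A B 𝒯 κ F + τ) ≤ F := by
  have hB : 0 ≤ B := by linarith [hF.1, hF.2]
  have ht := decayTime_nonneg (κ := κ) h𝒯.le hF
  calc decayFidelity A B 𝒯 κ (decayTime A B 𝒯 κ F + τ)
      ≤ decayFidelity A B 𝒯 κ (decayTime A B 𝒯 κ F) :=
        decayFidelity_antitoneOn hB h𝒯.le hκ.le ht (by simp only [mem_Ici]; linarith)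
          (by linarith)
    _ = F := decayFidelity_decayTime h𝒯.ne' hκ.ne' hF

end Decay

lemma swapFidelity_eq (F₁ F₂ : ℝ) :
    swapFidelity F₁ F₂ = ((4 * F₁ - 1) * (4 * F₂ - 1) + 3) / 12 := by
  unfold swapFidelity
  ring

lemma swapFidelity_le_swapFidelity {F₁ F₂ G₁ G₂ : ℝ} (hG₁ : 1 / 4 ≤ G₁) (hG₂ : 1 / 4 ≤ G₂)
    (h₁ : G₁ ≤ F₁) (h₂ : G₂ ≤ F₂) : swapFidelity G₁ G₂ ≤ swapFidelity F₁ F₂ := by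
  rw [swapFidelity_eq, swapFidelity_eq]
  have : 0 ≤ 4 * G₁ - 1 := by linarith
  have : 0 ≤ 4 * G₂ - 1 := by linarith
  have : 0 ≤ 4 * F₁ - 1 := by linarith
  gcongr

theorem decohere_then_swap_le_swap_general
    (A B 𝒯 κ : ℝ) (hA : 1 / 4 ≤ A)
    (h𝒯 : 0 < 𝒯) (hκ : 0 < κ)
    (Fd g : ℝ → ℝ) (D : ℝ → ℝ → ℝ) (Fs : ℝ → ℝ → ℝ)
    (hFd : ∀ t : ℝ, Fd t = A + B * Real.exp (-((t / 𝒯) ^ κ)))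
    (hg : ∀ F : ℝ, g F = 𝒯 * (Real.log (B / (F - A))) ^ (1 / κ))
    (hD : ∀ τ F : ℝ, D τ F = Fd (g F + τ))
    (hFs : ∀ F₁ F₂ : ℝ, Fs F₁ F₂ = F₁ * F₂ + (1 / 3) * (1 - F₁) * (1 - F₂)) :
    ∀ τ F₁ F₂ : ℝ, 0 ≤ τ → A < F₁ → F₁ ≤ A + B → A < F₂ → F₂ ≤ A + B →
      Fs (D τ F₁) (D τ F₂) ≤ Fs F₁ F₂ := by
  intro τ F₁ F₂ hτ h1l h1u h2l h2u
  obtain rfl : Fs = swapFidelity := funext₂ hFs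
  obtain rfl : Fd = decayFidelity A B 𝒯 κ := funext hFd
  obtain rfl : g = decayTime A B 𝒯 κ := funext hg
  have hB : 0 ≤ B := by linarith
  rw [hD, hD]
  exact swapFidelity_le_swapFidelity
    (hA.trans (le_decayFidelity hB _)) (hA.trans (le_decayFidelity hB _))
    (decayFidelity_decayTime_add_le h𝒯 hκ ⟨h1l, h1u⟩ hτ)
    (decayFidelity_decayTime_add_le h𝒯 hκ ⟨h2l, h2u⟩ hτ)

/-- Letting both pairs decohere for time `τ ≥ 0` before swapping yields fidelity no larger
than swapping them immediately: `F_s(D_τ(F₁), D_τ(F₂)) ≤ F_s(F₁, F₂)` for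
`F₁, F₂ ∈ (A, A+B]`, under the physical parameter constraints `1/4 ≤ A`, `A + B ≤ 1`. -/
theorem decohere_then_swap_le_swap
    (A B 𝒯 κ : ℝ) (hA : 1 / 4 ≤ A) (hB : 0 < B) (hAB : A + B ≤ 1)
    (h𝒯 : 0 < 𝒯) (hκ : 0 < κ)
    (Fd g : ℝ → ℝ) (D : ℝ → ℝ → ℝ) (Fs : ℝ → ℝ → ℝ)
    (hFd : ∀ t : ℝ, Fd t = A + B * Real.exp (-((t / 𝒯) ^ κ)))
    (hg : ∀ F : ℝ, g F = 𝒯 * (Real.log (B / (F - A))) ^ (1 / κ))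
    (hD : ∀ τ F : ℝ, D τ F = Fd (g F + τ))
    (hFs : ∀ F₁ F₂ : ℝ, Fs F₁ F₂ = F₁ * F₂ + (1 / 3) * (1 - F₁) * (1 - F₂)) :
    ∀ τ F₁ F₂ : ℝ, 0 ≤ τ → A < F₁ → F₁ ≤ A + B → A < F₂ → F₂ ≤ A + B →
      Fs (D τ F₁) (D τ F₂) ≤ Fs F₁ F₂ :=
  decohere_then_swap_le_swap_general A B 𝒯 κ hA h𝒯 hκ Fd g D Fs hFd hg hD hFs
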